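/- arXiv:1307.0571 — 3 statements merged into one kernel-verified Lean document; each statement's English description precedes it below -/
import Mathlib

section
/- Let a and b be l-mers over alphabet Σ and let d_a and d_b be non-negative integers. There exists an l-mer M with Hd(a, M) ≤ d_a and Hd(b, M) ≤ d_b if and only if Hd(a, b) ≤ d_a + d_b. -/
/-- Two `l`-mers `a` and `b` have a common neighbor `M` with `Hd(a, M) ≤ d_a` and
`Hd(b, M) ≤ d_b` if and only if `Hd(a, b) ≤ d_a + d_b`. -/
theorem common_neighbor_pair_iff {α : Type*} [Fintype α] [DecidableEq α]
    {l : ℕ} (hl : 0 < l) (a b : Fin l → α) (da db : ℕ) :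
    (∃ M : Fin l → α, hammingDist a M ≤ da ∧ hammingDist b M ≤ db) ↔
      hammingDist a b ≤ da + db := by
  constructor
  · rintro ⟨M, hA, hB⟩
    calc hammingDist a b ≤ hammingDist a M + hammingDist M b := hammingDist_triangle a M b
      _ = hammingDist a M + hammingDist b M := by rw [hammingDist_comm M b]
      _ ≤ da + db := Nat.add_le_add hA hB
  · intro h
    set D := Finset.univ.filter (fun i => a i ≠ b i) with hD
    have hDcard : D.card = hammingDist a b := rfl
    obtain ⟨S, hSsub, hScard⟩ := D.exists_subset_card_eq (n := min da D.card) (min_le_right _ _)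
    refine ⟨fun j => if j ∈ S then b j else a j, ?_, ?_⟩
    · have : Finset.univ.filter (fun i => a i ≠ if i ∈ S then b i else a i) ⊆ S := by
        intro i hi
        simp only [Finset.mem_filter] at hi
        by_contra hiS
        simp [hiS] at hi
      calc _ ≤ S.card := Finset.card_le_card this
        _ ≤ da := hScard ▸ min_le_left _ _
    · have : Finset.univ.filter (fun i => b i ≠ if i ∈ S then b i else a i) ⊆ D \ S := by
        intro i hi
        simp only [Finset.mem_filter] at hi
        by_cases hiS : i ∈ S
        · simp [hiS] at hi
        · simp only [hiS, if_neg, not_false_iff] at hi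
          exact Finset.mem_sdiff.2 ⟨by simp only [hD, Finset.mem_filter, Finset.mem_univ, true_and]; exact fun e => hi.2 e.symm, hiS⟩
      calc _ ≤ (D \ S).card := Finset.card_le_card this
        _ = D.card - S.card := Finset.card_sdiff_of_subset hSsub
        _ ≤ db := by
            rw [hScard]
            rcases le_total da D.card with hle | hle
            · simp only [min_eq_left hle]
              omega
            · simp [min_eq_right hle]
end

section
/- (Case 1 of the proof of Theorem 1.) Let T = (T_1, T_2, T_3) be three l-mers over alphabet Σ with position-type counts n_1, n_2, n_3, n_4, and let d_1, d_2, d_3 be non-negative integers such that Hd(T_i, T_j) ≤ d_i + d_j for all 1 ≤ i < j ≤ 3. If there exists an index i ∈ {1,2,3} with n_i ≥ d_i, then there exists an l-mer M with Hd(M, T_j) ≤ d_j for all j ∈ {1,2,3}. -/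
/-- `typeCount T i` is the number of positions of type `N_{i+1}` for the triple `T`:
positions `j` where `T i` differs from the other two `l`-mers, which agree with
each other. -/
def typeCount {α : Type*} [DecidableEq α] {l : ℕ} (T : Fin 3 → Fin l → α) (i : Fin 3) : ℕ :=
  (Finset.univ.filter fun j : Fin l =>
    (∀ p : Fin 3, p ≠ i → T i j ≠ T p j) ∧
    (∀ p q : Fin 3, p ≠ i → q ≠ i → T p j = T q j)).card

/-- Case 1 of the proof of Theorem 1: if `Hd(T_i, T_j) ≤ d_i + d_j` for all
`1 ≤ i < j ≤ 3` and there exists `i` with `n_i ≥ d_i`, then the triple has a common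
neighbor `M` with `Hd(M, T_j) ≤ d_j` for all `j`. -/
theorem common_neighbor_triple_case1 {α : Type*} [DecidableEq α]
    {l : ℕ} (hl : 0 < l) (T : Fin 3 → Fin l → α) (d : Fin 3 → ℕ)
    (hpair : ∀ i j : Fin 3, i < j → hammingDist (T i) (T j) ≤ d i + d j)
    (hcase : ∃ i : Fin 3, d i ≤ typeCount T i) :
    ∃ M : Fin l → α, ∀ j : Fin 3, hammingDist M (T j) ≤ d j := by
  obtain ⟨i, hi⟩ := hcase
  set F := (Finset.univ.filter fun j : Fin l =>
    (∀ p : Fin 3, p ≠ i → T i j ≠ T p j) ∧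
    (∀ p q : Fin 3, p ≠ i → q ≠ i → T p j = T q j)) with hF
  obtain ⟨S, hSF, hScard⟩ := Finset.exists_subset_card_eq (s := F) hi
  have hp1 : (i + 1 : Fin 3) ≠ i := by fin_cases i <;> decide
  have hSmem : ∀ j ∈ S, (∀ p : Fin 3, p ≠ i → T i j ≠ T p j) ∧
      (∀ p q : Fin 3, p ≠ i → q ≠ i → T p j = T q j) := by
    intro j hj
    have := hSF hj
    rw [hF, Finset.mem_filter] at this
    exact this.2
  have hpair' : ∀ p q : Fin 3, p ≠ q → hammingDist (T p) (T q) ≤ d p + d q := by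
    intro p q hpq
    rcases lt_or_gt_of_ne hpq with h | h
    · exact hpair p q h
    · rw [hammingDist_comm, Nat.add_comm]; exact hpair q p h
  refine ⟨fun j => if j ∈ S then T (i + 1) j else T i j, ?_⟩
  intro k
  by_cases hk : k = i
  · subst hk
    calc hammingDist (fun j => if j ∈ S then T (k + 1) j else T k j) (T k)
        ≤ S.card := by
          rw [hammingDist]
          apply Finset.card_le_card
          intro j hj
          simp only [Finset.mem_filter, Finset.mem_univ, true_and] at hj
          by_contra hjS
          exact hj (by simp [hjS])
      _ = d k := hScard
  · -- mismatches of M vs T k are contained in mismatches(T i, T k) \ S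
    have hSsub : S ⊆ Finset.univ.filter fun j => T i j ≠ T k j := by
      intro j hj
      simp only [Finset.mem_filter, Finset.mem_univ, true_and]
      exact (hSmem j hj).1 k hk
    have hsub : (Finset.univ.filter fun j =>
        (if j ∈ S then T (i + 1) j else T i j) ≠ T k j) ⊆
        (Finset.univ.filter fun j => T i j ≠ T k j) \ S := by
      intro j hj
      simp only [Finset.mem_filter, Finset.mem_univ, true_and] at hj
      by_cases hjS : j ∈ S
      · exfalso
        apply hj
        simp only [hjS, if_pos]
        exact (hSmem j hjS).2 (i + 1) k hp1 hk
      · rw [Finset.mem_sdiff, Finset.mem_filter]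
        simp only [hjS, if_neg, not_false_iff] at hj
        exact ⟨⟨Finset.mem_univ j, hj⟩, hjS⟩
    calc hammingDist (fun j => if j ∈ S then T (i + 1) j else T i j) (T k)
        ≤ ((Finset.univ.filter fun j => T i j ≠ T k j) \ S).card := by
          rw [hammingDist]; exact Finset.card_le_card hsub
      _ = (Finset.univ.filter fun j => T i j ≠ T k j).card - S.card :=
          Finset.card_sdiff_of_subset hSsub
      _ = hammingDist (T i) (T k) - d i := by rw [hammingDist, hScard]
      _ ≤ (d i + d k) - d i := Nat.sub_le_sub_right (hpair' i k (Ne.symm hk)) _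
      _ = d k := by omega
end

section
/- (Case 2 of the proof of Theorem 1.) Let T = (T_1, T_2, T_3) be three l-mers over alphabet Σ with position-type counts n_1, n_2, n_3, n_4, and let d_1, d_2, d_3 be non-negative integers such that n_i < d_i for all i ∈ {1,2,3}, Hd(T_i, T_j) ≤ d_i + d_j for all 1 ≤ i < j ≤ 3, and Cd(T) ≤ d_1 + d_2 + d_3. Then there exists an l-mer M with Hd(M, T_i) ≤ d_i for all i ∈ {1,2,3}. -/
open Finset



/-- The consensus total distance of a finite family `T` of `l`-mers. -/
def consensusDist {α : Type*} [Fintype α] [DecidableEq α] {ι : Type*} [Fintype ι]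
    {l : ℕ} (T : ι → Fin l → α) : ℕ :=
  ∑ j : Fin l, (Fintype.card ι -
    Finset.univ.sup fun c : α => (Finset.univ.filter fun i : ι => T i j = c).card)

lemma typeIff0' {α : Type*} (f : Fin 3 → α) :
    ((∀ p : Fin 3, p ≠ 0 → f 0 ≠ f p) ∧ (∀ p q : Fin 3, p ≠ 0 → q ≠ 0 → f p = f q))
    ↔ (f 1 = f 2 ∧ f 0 ≠ f 1) := by
  constructor
  · rintro ⟨h1, h2⟩; exact ⟨h2 1 2 (by decide) (by decide), h1 1 (by decide)⟩
  · rintro ⟨h12, h01⟩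
    refine ⟨fun p hp => ?_, fun p q hp hq => ?_⟩
    · fin_cases p <;> simp_all
    · fin_cases p <;> fin_cases q <;> simp_all

lemma typeIff1' {α : Type*} (f : Fin 3 → α) :
    ((∀ p : Fin 3, p ≠ 1 → f 1 ≠ f p) ∧ (∀ p q : Fin 3, p ≠ 1 → q ≠ 1 → f p = f q))
    ↔ (f 0 = f 2 ∧ f 1 ≠ f 0) := by
  constructor
  · rintro ⟨h1, h2⟩; exact ⟨h2 0 2 (by decide) (by decide), h1 0 (by decide)⟩
  · rintro ⟨h02, h10⟩
    refine ⟨fun p hp => ?_, fun p q hp hq => ?_⟩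
    · fin_cases p <;> simp_all
    · fin_cases p <;> fin_cases q <;> simp_all

lemma typeIff2' {α : Type*} (f : Fin 3 → α) :
    ((∀ p : Fin 3, p ≠ 2 → f 2 ≠ f p) ∧ (∀ p q : Fin 3, p ≠ 2 → q ≠ 2 → f p = f q))
    ↔ (f 0 = f 1 ∧ f 2 ≠ f 0) := by
  constructor
  · rintro ⟨h1, h2⟩; exact ⟨h2 0 1 (by decide) (by decide), h1 0 (by decide)⟩
  · rintro ⟨h01, h20⟩
    refine ⟨fun p hp => ?_, fun p q hp hq => ?_⟩
    · fin_cases p <;> simp_all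
    · fin_cases p <;> fin_cases q <;> simp_all

lemma threeDistinct' {α : Type*} (f : Fin 3 → α) (u : f 0 ≠ f 1) (v : f 0 ≠ f 2)
    (w : f 1 ≠ f 2) (a b : Fin 3) (h : f a = f b) : a = b := by
  fin_cases a <;> fin_cases b <;> simp_all

set_option maxHeartbeats 1000000 in
/-- Case 2 of the proof of Theorem 1: if `n_i < d_i` for all `i`,
`Hd(T_i, T_j) ≤ d_i + d_j` for all `1 ≤ i < j ≤ 3`, and `Cd(T) ≤ d_1 + d_2 + d_3`,
then the triple has a common neighbor `M` with `Hd(M, T_i) ≤ d_i` for all `i`. -/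
theorem common_neighbor_triple_case2 {α : Type*} [Fintype α] [DecidableEq α]
    {l : ℕ} (hl : 0 < l) (T : Fin 3 → Fin l → α) (d : Fin 3 → ℕ)
    (hlt : ∀ i : Fin 3, typeCount T i < d i)
    (hpair : ∀ i j : Fin 3, i < j → hammingDist (T i) (T j) ≤ d i + d j)
    (hcd : consensusDist T ≤ d 0 + d 1 + d 2) :
    ∃ M : Fin l → α, ∀ i : Fin 3, hammingDist M (T i) ≤ d i := by
  classical
  set S0 : Finset (Fin l) := univ.filter (fun j => T 1 j = T 2 j ∧ T 0 j ≠ T 1 j) with hS0def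
  set S1 : Finset (Fin l) := univ.filter (fun j => T 0 j = T 2 j ∧ T 1 j ≠ T 0 j) with hS1def
  set S2 : Finset (Fin l) := univ.filter (fun j => T 0 j = T 1 j ∧ T 2 j ≠ T 0 j) with hS2def
  set S4 : Finset (Fin l) :=
    univ.filter (fun j => T 0 j ≠ T 1 j ∧ T 0 j ≠ T 2 j ∧ T 1 j ≠ T 2 j) with hS4def
  have mem_S0 : ∀ j, j ∈ S0 ↔ T 1 j = T 2 j ∧ T 0 j ≠ T 1 j := by
    intro j; rw [hS0def, mem_filter]; simp
  have mem_S1 : ∀ j, j ∈ S1 ↔ T 0 j = T 2 j ∧ T 1 j ≠ T 0 j := by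
    intro j; rw [hS1def, mem_filter]; simp
  have mem_S2 : ∀ j, j ∈ S2 ↔ T 0 j = T 1 j ∧ T 2 j ≠ T 0 j := by
    intro j; rw [hS2def, mem_filter]; simp
  have mem_S4 : ∀ j, j ∈ S4 ↔ T 0 j ≠ T 1 j ∧ T 0 j ≠ T 2 j ∧ T 1 j ≠ T 2 j := by
    intro j; rw [hS4def, mem_filter]; simp
  -- typeCount identifications
  have e0 : typeCount T 0 = S0.card := by
    unfold typeCount
    rw [hS0def]
    congr 1
    apply Finset.filter_congr
    intro j _
    exact typeIff0' (fun i => T i j)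
  have e1 : typeCount T 1 = S1.card := by
    unfold typeCount
    rw [hS1def]
    congr 1
    apply Finset.filter_congr
    intro j _
    exact typeIff1' (fun i => T i j)
  have e2 : typeCount T 2 = S2.card := by
    unfold typeCount
    rw [hS2def]
    congr 1
    apply Finset.filter_congr
    intro j _
    exact typeIff2' (fun i => T i j)
  -- disjointness
  have dis01 : Disjoint S0 S1 := by
    rw [Finset.disjoint_left]
    intro j hj hj'
    rw [mem_S0] at hj; rw [mem_S1] at hj'
    exact hj.2 (hj'.1.trans hj.1.symm)
  have dis02 : Disjoint S0 S2 := by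
    rw [Finset.disjoint_left]
    intro j hj hj'
    rw [mem_S0] at hj; rw [mem_S2] at hj'
    exact hj.2 hj'.1
  have dis12 : Disjoint S1 S2 := by
    rw [Finset.disjoint_left]
    intro j hj hj'
    rw [mem_S1] at hj; rw [mem_S2] at hj'
    exact hj.2 hj'.1.symm
  have dis04 : Disjoint S0 S4 := by
    rw [Finset.disjoint_left]
    intro j hj hj'
    rw [mem_S0] at hj; rw [mem_S4] at hj'
    exact hj'.2.2 hj.1
  have dis14 : Disjoint S1 S4 := by
    rw [Finset.disjoint_left]
    intro j hj hj'
    rw [mem_S1] at hj; rw [mem_S4] at hj'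
    exact hj'.2.1 hj.1
  have dis24 : Disjoint S2 S4 := by
    rw [Finset.disjoint_left]
    intro j hj hj'
    rw [mem_S2] at hj; rw [mem_S4] at hj'
    exact hj'.1 hj.1
  -- pairwise Hamming lower bounds
  have hH01 : S0.card + S1.card + S4.card ≤ hammingDist (T 0) (T 1) := by
    have hsub : (S0 ∪ S1) ∪ S4 ⊆ univ.filter (fun j => T 0 j ≠ T 1 j) := by
      intro j hj
      rcases mem_union.1 hj with hj' | hj'
      · rcases mem_union.1 hj' with h | h
        · exact mem_filter.2 ⟨mem_univ _, ((mem_S0 j).1 h).2⟩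
        · exact mem_filter.2 ⟨mem_univ _, Ne.symm ((mem_S1 j).1 h).2⟩
      · exact mem_filter.2 ⟨mem_univ _, ((mem_S4 j).1 hj').1⟩
    calc S0.card + S1.card + S4.card = ((S0 ∪ S1) ∪ S4).card := by
          rw [Finset.card_union_of_disjoint (Finset.disjoint_union_left.2 ⟨dis04, dis14⟩),
            Finset.card_union_of_disjoint dis01]
      _ ≤ (univ.filter (fun j => T 0 j ≠ T 1 j)).card := Finset.card_le_card hsub
      _ ≤ hammingDist (T 0) (T 1) := by unfold hammingDist; exact le_of_eq rfl
  have hH02 : S0.card + S2.card + S4.card ≤ hammingDist (T 0) (T 2) := by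
    have hsub : (S0 ∪ S2) ∪ S4 ⊆ univ.filter (fun j => T 0 j ≠ T 2 j) := by
      intro j hj
      rcases mem_union.1 hj with hj' | hj'
      · rcases mem_union.1 hj' with h | h
        · obtain ⟨h12, h01⟩ := (mem_S0 j).1 h
          exact mem_filter.2 ⟨mem_univ _, fun e => h01 (e.trans h12.symm)⟩
        · exact mem_filter.2 ⟨mem_univ _, Ne.symm ((mem_S2 j).1 h).2⟩
      · exact mem_filter.2 ⟨mem_univ _, ((mem_S4 j).1 hj').2.1⟩
    calc S0.card + S2.card + S4.card = ((S0 ∪ S2) ∪ S4).card := by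
          rw [Finset.card_union_of_disjoint (Finset.disjoint_union_left.2 ⟨dis04, dis24⟩),
            Finset.card_union_of_disjoint dis02]
      _ ≤ (univ.filter (fun j => T 0 j ≠ T 2 j)).card := Finset.card_le_card hsub
      _ ≤ hammingDist (T 0) (T 2) := by unfold hammingDist; exact le_of_eq rfl
  have hH12 : S1.card + S2.card + S4.card ≤ hammingDist (T 1) (T 2) := by
    have hsub : (S1 ∪ S2) ∪ S4 ⊆ univ.filter (fun j => T 1 j ≠ T 2 j) := by
      intro j hj
      rcases mem_union.1 hj with hj' | hj'
      · rcases mem_union.1 hj' with h | h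
        · obtain ⟨h02, h10⟩ := (mem_S1 j).1 h
          exact mem_filter.2 ⟨mem_univ _, fun e => h10 (e.trans h02.symm)⟩
        · obtain ⟨h01, h20⟩ := (mem_S2 j).1 h
          exact mem_filter.2 ⟨mem_univ _, fun e => h20 (h01.trans e).symm⟩
      · exact mem_filter.2 ⟨mem_univ _, ((mem_S4 j).1 hj').2.2⟩
    calc S1.card + S2.card + S4.card = ((S1 ∪ S2) ∪ S4).card := by
          rw [Finset.card_union_of_disjoint (Finset.disjoint_union_left.2 ⟨dis14, dis24⟩),
            Finset.card_union_of_disjoint dis12]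
      _ ≤ (univ.filter (fun j => T 1 j ≠ T 2 j)).card := Finset.card_le_card hsub
      _ ≤ hammingDist (T 1) (T 2) := by unfold hammingDist; exact le_of_eq rfl
  -- consensus lower bound
  have hcdlow : S0.card + S1.card + S2.card + 2 * S4.card ≤ consensusDist T := by
    have key : ∀ j : Fin l,
        ((if j ∈ S0 then 1 else 0) + (if j ∈ S1 then 1 else 0) + (if j ∈ S2 then 1 else 0)
          + (if j ∈ S4 then 2 else 0)) ≤
        (Fintype.card (Fin 3) -
          Finset.univ.sup fun c : α => (Finset.univ.filter fun i : Fin 3 => T i j = c).card) := by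
      intro j
      simp only [Fintype.card_fin]
      by_cases h4 : j ∈ S4
      · have h0 : j ∉ S0 := Finset.disjoint_right.1 dis04 h4
        have h1 : j ∉ S1 := Finset.disjoint_right.1 dis14 h4
        have h2 : j ∉ S2 := Finset.disjoint_right.1 dis24 h4
        have hsup : (Finset.univ.sup fun c : α =>
            (Finset.univ.filter fun i : Fin 3 => T i j = c).card) ≤ 1 := by
          apply Finset.sup_le
          intro c _
          apply Finset.card_le_one.2
          intro a ha b hb
          obtain ⟨u, v, w⟩ := (mem_S4 j).1 h4
          exact threeDistinct' (fun i => T i j) u v w a b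
            ((Finset.mem_filter.1 ha).2.trans (Finset.mem_filter.1 hb).2.symm)
        rw [if_neg h0, if_neg h1, if_neg h2, if_pos h4]
        omega
      · by_cases htriv : j ∈ S0 ∨ j ∈ S1 ∨ j ∈ S2
        · have hne : ¬ (T 0 j = T 1 j ∧ T 0 j = T 2 j) := by
            rintro ⟨u, v⟩
            rcases htriv with h | h | h
            · exact ((mem_S0 j).1 h).2 u
            · exact ((mem_S1 j).1 h).2 u.symm
            · exact ((mem_S2 j).1 h).2 v.symm
          have hsup : (Finset.univ.sup fun c : α =>
              (Finset.univ.filter fun i : Fin 3 => T i j = c).card) ≤ 2 := by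
            apply Finset.sup_le
            intro c _
            by_contra hgt
            push_neg at hgt
            have hle3 : (Finset.univ.filter fun i : Fin 3 => T i j = c).card ≤ 3 := by
              have := Finset.card_le_card
                (Finset.filter_subset (fun i : Fin 3 => T i j = c) Finset.univ)
              simpa using this
            have hcard : (Finset.univ.filter fun i : Fin 3 => T i j = c).card = 3 := by omega
            have huniv : (Finset.univ.filter fun i : Fin 3 => T i j = c) = Finset.univ := by
              apply Finset.eq_univ_of_card
              simpa using hcard
            have mm : ∀ i : Fin 3, T i j = c := by
              intro i
              have h0 : i ∈ Finset.univ.filter fun i : Fin 3 => T i j = c := by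
                rw [huniv]; exact Finset.mem_univ _
              exact (Finset.mem_filter.1 h0).2
            have m0 := mm 0
            have m1 := mm 1
            have m2 := mm 2
            exact hne ⟨m0.trans m1.symm, m0.trans m2.symm⟩
          have hone : ((if j ∈ S0 then 1 else 0) + (if j ∈ S1 then 1 else 0)
              + (if j ∈ S2 then 1 else 0) + (if j ∈ S4 then 2 else 0)) = 1 := by
            rcases htriv with h | h | h
            · rw [if_pos h, if_neg (Finset.disjoint_left.1 dis01 h),
                if_neg (Finset.disjoint_left.1 dis02 h), if_neg h4]
            · rw [if_neg (Finset.disjoint_right.1 dis01 h), if_pos h,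
                if_neg (Finset.disjoint_left.1 dis12 h), if_neg h4]
            · rw [if_neg (Finset.disjoint_right.1 dis02 h),
                if_neg (Finset.disjoint_right.1 dis12 h), if_pos h, if_neg h4]
          omega
        · push_neg at htriv
          rw [if_neg htriv.1, if_neg htriv.2.1, if_neg htriv.2.2, if_neg h4]
          omega
    have hsum : S0.card + S1.card + S2.card + 2 * S4.card
        = ∑ j : Fin l, ((if j ∈ S0 then 1 else 0) + (if j ∈ S1 then 1 else 0)
            + (if j ∈ S2 then 1 else 0) + (if j ∈ S4 then 2 else 0)) := by
      simp only [Finset.sum_add_distrib, Finset.sum_ite_mem, Finset.univ_inter,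
        Finset.sum_const, smul_eq_mul, mul_one]
      ring
    rw [hsum]
    exact Finset.sum_le_sum fun j _ => key j
  -- numeric facts
  have hlt0 : S0.card < d 0 := e0 ▸ hlt 0
  have hlt1 : S1.card < d 1 := e1 ▸ hlt 1
  have hlt2 : S2.card < d 2 := e2 ▸ hlt 2
  have hp01 : S0.card + S1.card + S4.card ≤ d 0 + d 1 := le_trans hH01 (hpair 0 1 (by decide))
  have hp02 : S0.card + S2.card + S4.card ≤ d 0 + d 2 := le_trans hH02 (hpair 0 2 (by decide))
  have hp12 : S1.card + S2.card + S4.card ≤ d 1 + d 2 := le_trans hH12 (hpair 1 2 (by decide))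
  have hCd : S0.card + S1.card + S2.card + 2 * S4.card ≤ d 0 + d 1 + d 2 := le_trans hcdlow hcd
  -- choose the subsets of S4
  have hx0le : S0.card + S4.card - d 0 ≤ S4.card := by omega
  obtain ⟨A0, hA0sub, hA0card⟩ := Finset.exists_subset_card_eq hx0le
  have hx1le : S1.card + S4.card - d 1 ≤ (S4 \ A0).card := by
    rw [Finset.card_sdiff_of_subset hA0sub, hA0card]
    omega
  obtain ⟨A1, hA1sub, hA1card⟩ := Finset.exists_subset_card_eq hx1le
  have hA1sub' : A1 ⊆ S4 := hA1sub.trans Finset.sdiff_subset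
  have hA01 : Disjoint A0 A1 := by
    refine Finset.disjoint_right.2 fun j hj => ?_
    exact (Finset.mem_sdiff.1 (hA1sub hj)).2
  -- the common neighbor
  set M : Fin l → α := fun j => if j ∈ A0 then T 0 j else if j ∈ A1 then T 1 j
    else if j ∈ S4 then T 2 j else if T 1 j = T 2 j then T 1 j else T 0 j with hMdef
  refine ⟨M, ?_⟩
  have hM0 : hammingDist M (T 0) ≤ d 0 := by
    have hsub : ∀ j : Fin l, M j ≠ T 0 j → j ∈ S0 ∪ (S4 \ A0) := by
      intro j hj
      by_contra hout
      apply hj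
      rw [mem_union, Finset.mem_sdiff] at hout
      push_neg at hout
      obtain ⟨hnS0, hns⟩ := hout
      by_cases ha0 : j ∈ A0
      · simp [hMdef, ha0]
      · have hns4 : j ∉ S4 := fun h => ha0 (hns h)
        have hna1 : j ∉ A1 := fun h => hns4 (hA1sub' h)
        simp only [hMdef, ha0, hna1, hns4, if_false]
        by_cases h12 : T 1 j = T 2 j
        · rw [if_pos h12]
          by_contra hne
          exact hnS0 ((mem_S0 j).2 ⟨h12, fun e => hne e.symm⟩)
        · rw [if_neg h12]
    have hcard : hammingDist M (T 0) ≤ (S0 ∪ (S4 \ A0)).card := by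
      unfold hammingDist
      apply Finset.card_le_card
      intro j hj
      exact hsub j (Finset.mem_filter.1 hj).2
    have hle : (S0 ∪ (S4 \ A0)).card ≤ S0.card + (S4.card - (S0.card + S4.card - d 0)) := by
      refine le_trans (Finset.card_union_le _ _) ?_
      rw [Finset.card_sdiff_of_subset hA0sub, hA0card]
    omega
  have hM1 : hammingDist M (T 1) ≤ d 1 := by
    have hsub : ∀ j : Fin l, M j ≠ T 1 j → j ∈ S1 ∪ (S4 \ A1) := by
      intro j hj
      by_contra hout
      apply hj
      rw [mem_union, Finset.mem_sdiff] at hout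
      push_neg at hout
      obtain ⟨hnS1, hns⟩ := hout
      by_cases ha1 : j ∈ A1
      · have ha0 : j ∉ A0 := Finset.disjoint_right.1 hA01 ha1
        simp [hMdef, ha0, ha1]
      · have hns4 : j ∉ S4 := fun h => ha1 (hns h)
        have hna0 : j ∉ A0 := fun h => hns4 (hA0sub h)
        simp only [hMdef, hna0, ha1, hns4, if_false]
        by_cases h12 : T 1 j = T 2 j
        · rw [if_pos h12]
        · rw [if_neg h12]
          have hs4' : ¬(T 0 j ≠ T 1 j ∧ T 0 j ≠ T 2 j ∧ T 1 j ≠ T 2 j) :=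
            fun h => hns4 ((mem_S4 j).2 h)
          have hnS1' : ¬(T 0 j = T 2 j ∧ T 1 j ≠ T 0 j) := fun h => hnS1 ((mem_S1 j).2 h)
          by_cases h01 : T 0 j = T 1 j
          · exact h01
          · have h02 : T 0 j = T 2 j := by
              by_contra h02
              exact hs4' ⟨h01, h02, h12⟩
            exact (not_not.1 (fun h => hnS1' ⟨h02, h⟩)).symm
    have hcard : hammingDist M (T 1) ≤ (S1 ∪ (S4 \ A1)).card := by
      unfold hammingDist
      apply Finset.card_le_card
      intro j hj
      exact hsub j (Finset.mem_filter.1 hj).2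
    have hle : (S1 ∪ (S4 \ A1)).card ≤ S1.card + (S4.card - (S1.card + S4.card - d 1)) := by
      refine le_trans (Finset.card_union_le _ _) ?_
      rw [Finset.card_sdiff_of_subset hA1sub', hA1card]
    omega
  have hM2 : hammingDist M (T 2) ≤ d 2 := by
    have hsub : ∀ j : Fin l, M j ≠ T 2 j → j ∈ (S2 ∪ A0) ∪ A1 := by
      intro j hj
      by_contra hout
      apply hj
      rw [mem_union, mem_union] at hout
      push_neg at hout
      obtain ⟨⟨hnS2, hna0⟩, hna1⟩ := hout
      by_cases hs4 : j ∈ S4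
      · simp [hMdef, hna0, hna1, hs4]
      · simp only [hMdef, hna0, hna1, hs4, if_false]
        by_cases h12 : T 1 j = T 2 j
        · rw [if_pos h12]; exact h12
        · rw [if_neg h12]
          have hs4' : ¬(T 0 j ≠ T 1 j ∧ T 0 j ≠ T 2 j ∧ T 1 j ≠ T 2 j) :=
            fun h => hs4 ((mem_S4 j).2 h)
          have hnS2' : ¬(T 0 j = T 1 j ∧ T 2 j ≠ T 0 j) := fun h => hnS2 ((mem_S2 j).2 h)
          by_cases h02 : T 0 j = T 2 j
          · exact h02
          · have h01 : T 0 j = T 1 j := by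
              by_contra h01
              exact hs4' ⟨h01, h02, h12⟩
            exact (not_not.1 (fun h => hnS2' ⟨h01, h⟩)).symm
    have hcard : hammingDist M (T 2) ≤ ((S2 ∪ A0) ∪ A1).card := by
      unfold hammingDist
      apply Finset.card_le_card
      intro j hj
      exact hsub j (Finset.mem_filter.1 hj).2
    have hle : ((S2 ∪ A0) ∪ A1).card
        ≤ S2.card + (S0.card + S4.card - d 0) + (S1.card + S4.card - d 1) := by
      refine le_trans (Finset.card_union_le _ _) ?_
      have h2 := Finset.card_union_le S2 A0
      omega
    omega
  intro i
  fin_cases i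
  · exact hM0
  · exact hM1
  · exact hM2
end
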